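/- arXiv:math/0612343 — 2 statements merged into one kernel-verified Lean document; each statement's English description precedes it below -/
import Mathlib

section
/- Let $K(z,w)=\sum_{k,\ell\ge 0}a_{k\ell}z^k\bar w^\ell$ be a matrix-valued reproducing kernel with $K(z,w)^{-1}=\sum_{k,\ell\ge 0}b_{k\ell}z^k\bar w^\ell$, and let $\tilde K(z,w)=a_{00}^{1/2}K(z,0)^{-1}K(z,w)K(0,w)^{-1}a_{00}^{1/2}$ be the normalized kernel with expansion $\tilde K(z,w)=\sum \tilde a_{k\ell}z^k\bar w^\ell$. Then for all $k,\ell\ge 0$: $\tilde a_{k+1,\ell+1} = a_{00}^{1/2}\Big(\sum_{s=1}^k\sum_{t=1}^\ell b_{s0}a_{k+1-s,\ell+1-t}b_{0t} + \sum_{s=1}^k b_{s0}a_{k+1-s,\ell+1}b_{00} + \sum_{t=1}^\ell b_{00}a_{k+1,\ell+1-t}b_{0t} + b_{00}a_{k+1,\ell+1}b_{00} - b_{k+1,0}a_{00}b_{0,\ell+1}\Big)a_{00}^{1/2}$. -/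
open Finset ComplexOrder

/-- The (k+1, ℓ+1) coefficient of the normalized kernel
K̃(z,w) = a₀₀^{1/2} K(z,0)⁻¹ K(z,w) K(0,w)⁻¹ a₀₀^{1/2}. -/
theorem normalized_kernel_coefficient {N : ℕ}
    (a b : ℕ → ℕ → Matrix (Fin N) (Fin N) ℂ)
    (r : Matrix (Fin N) (Fin N) ℂ)
    (hr : r * r = a 0 0)
    (hpd : (a 0 0).PosDef)
    (hconv₁ : ∀ m, 1 ≤ m → ∑ s ∈ Finset.range (m + 1), b s 0 * a (m - s) 0 = 0)
    (hconv₂ : ∀ m, 1 ≤ m → ∑ t ∈ Finset.range (m + 1), a 0 (m - t) * b 0 t = 0)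
    (ta : ℕ → ℕ → Matrix (Fin N) (Fin N) ℂ)
    (hta : ∀ k l, ta k l
      = r * (∑ s ∈ Finset.range (k + 1), ∑ t ∈ Finset.range (l + 1),
          b s 0 * a (k - s) (l - t) * b 0 t) * r) :
    ∀ k l, ta (k + 1) (l + 1)
      = r * (∑ s ∈ Finset.Icc 1 k, ∑ t ∈ Finset.Icc 1 l,
            b s 0 * a (k + 1 - s) (l + 1 - t) * b 0 t
          + ∑ s ∈ Finset.Icc 1 k, b s 0 * a (k + 1 - s) (l + 1) * b 0 0
          + ∑ t ∈ Finset.Icc 1 l, b 0 0 * a (k + 1) (l + 1 - t) * b 0 t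
          + b 0 0 * a (k + 1) (l + 1) * b 0 0
          - b (k + 1) 0 * a 0 0 * b 0 (l + 1)) * r := by
  intro k l
  rw [hta]
  have hIcc : ∀ (g : ℕ → Matrix (Fin N) (Fin N) ℂ) (n : ℕ),
      ∑ i ∈ Finset.Icc 1 n, g i = ∑ i ∈ Finset.range n, g (i + 1) := by
    intro g n
    induction n with
    | zero => simp
    | succ n ih =>
        rw [Finset.sum_Icc_succ_top (by omega), ih, Finset.sum_range_succ]
  congr 2
  -- peel t = l+1 from inner sums
  have hB : ∑ t ∈ Finset.range (l + 2), b (k+1) 0 * a (k+1-(k+1)) (l+1-t) * b 0 t = 0 := by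
    have : ∑ t ∈ Finset.range (l + 2), b (k+1) 0 * a (k+1-(k+1)) (l+1-t) * b 0 t
        = b (k+1) 0 * ∑ t ∈ Finset.range (l + 2), a 0 (l+1-t) * b 0 t := by
      rw [Finset.mul_sum]
      simp [mul_assoc]
    rw [this, hconv₂ (l+1) (by omega), mul_zero]
  have hD : ∑ s ∈ Finset.range (k + 1), b s 0 * a (k+1-s) (l+1-(l+1)) * b 0 (l+1)
      = -(b (k+1) 0 * a 0 0 * b 0 (l+1)) := by
    have h := hconv₁ (k+1) (by omega)
    rw [Finset.sum_range_succ] at h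
    have h' : ∑ s ∈ Finset.range (k + 1), b s 0 * a (k+1-s) 0 = -(b (k+1) 0 * a 0 0) := by
      simp at h
      linear_combination (norm := abel) h
    calc ∑ s ∈ Finset.range (k + 1), b s 0 * a (k+1-s) (l+1-(l+1)) * b 0 (l+1)
        = (∑ s ∈ Finset.range (k + 1), b s 0 * a (k+1-s) 0) * b 0 (l+1) := by
          rw [Finset.sum_mul]; simp
      _ = -(b (k+1) 0 * a 0 0 * b 0 (l+1)) := by rw [h']; simp
  calc ∑ s ∈ Finset.range (k + 1 + 1), ∑ t ∈ Finset.range (l + 1 + 1),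
        b s 0 * a (k + 1 - s) (l + 1 - t) * b 0 t
      = (∑ s ∈ Finset.range (k + 1), ∑ t ∈ Finset.range (l + 2),
          b s 0 * a (k + 1 - s) (l + 1 - t) * b 0 t)
        + ∑ t ∈ Finset.range (l + 2), b (k+1) 0 * a (k+1-(k+1)) (l+1-t) * b 0 t := by
        rw [Finset.sum_range_succ]
    _ = ∑ s ∈ Finset.range (k + 1), ∑ t ∈ Finset.range (l + 2),
          b s 0 * a (k + 1 - s) (l + 1 - t) * b 0 t := by rw [hB, add_zero]
    _ = (∑ s ∈ Finset.range (k + 1), ∑ t ∈ Finset.range (l + 1),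
          b s 0 * a (k + 1 - s) (l + 1 - t) * b 0 t)
        + ∑ s ∈ Finset.range (k + 1), b s 0 * a (k+1-s) (l+1-(l+1)) * b 0 (l+1) := by
        rw [← Finset.sum_add_distrib]
        refine Finset.sum_congr rfl fun s _ => ?_
        rw [Finset.sum_range_succ]
    _ = (∑ s ∈ Finset.range (k + 1), ∑ t ∈ Finset.range (l + 1),
          b s 0 * a (k + 1 - s) (l + 1 - t) * b 0 t)
        - b (k + 1) 0 * a 0 0 * b 0 (l + 1) := by rw [hD]; abel
    _ = _ := by
      congr 1
      rw [Finset.sum_range_succ']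
      have hinner : ∀ s, ∑ t ∈ Finset.range (l + 1), b s 0 * a (k + 1 - s) (l + 1 - t) * b 0 t
          = (∑ t ∈ Finset.range l, b s 0 * a (k + 1 - s) (l + 1 - (t+1)) * b 0 (t+1))
            + b s 0 * a (k + 1 - s) (l + 1) * b 0 0 := by
        intro s
        rw [Finset.sum_range_succ']
        simp
      simp only [hinner]
      rw [Finset.sum_add_distrib]
      rw [hIcc (fun s => ∑ t ∈ Finset.Icc 1 l, b s 0 * a (k + 1 - s) (l + 1 - t) * b 0 t) k]
      rw [hIcc (fun s => b s 0 * a (k + 1 - s) (l + 1) * b 0 0) k]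
      rw [hIcc (fun t => b 0 0 * a (k + 1) (l + 1 - t) * b 0 t) l]
      simp only [fun s => hIcc (fun t => b s 0 * a (k + 1 - s) (l + 1 - t) * b 0 t) l]
      simp only [Nat.sub_zero, Nat.sub_self]
      abel
end

section
/- Let $\sigma$ be a permutation of $\{1,2,3\}$ and let $C\in M_3(\mathbb C)$ have entries $c_{ij}=0$ for $j\neq\sigma(i)$ (a generalized permutation matrix pattern). Suppose $\sigma$ is the transposition $(1\,2)$ or the transposition $(2\,3)$, $C$ is invertible (equivalently $c_{i,\sigma(i)}\neq 0$ for all $i$), and $C S^t = \tilde S^t C$ where $S = S_2(c_1,c_2)$ and $\tilde S = S_2(\tilde c_1,\tilde c_2)$ are the $3\times 3$ forward shifts with subdiagonal entries $c_1,c_2$ and $\tilde c_1,\tilde c_2$ respectively. Then $c_1=c_2=\tilde c_1=\tilde c_2=0$. -/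
open Matrix

/-- The 3×3 forward shift with subdiagonal entries c₁, c₂:
(S₂(c₁,c₂))_{ℓp} = c_ℓ δ_{p+1,ℓ}. -/
def S₂ (c₁ c₂ : ℂ) : Matrix (Fin 3) (Fin 3) ℂ :=
  Matrix.of fun ℓ p => if ℓ = 1 ∧ p = 0 then c₁ else if ℓ = 2 ∧ p = 1 then c₂ else 0

/-- If C is an invertible generalized permutation matrix whose pattern is a transposition
(1 2) or (2 3), and C S₂(c₁,c₂)ᵀ = S₂(ct₁,ct₂)ᵀ C, then all shift entries vanish. -/
theorem shift_intertwined_by_permutation_vanishes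
    (σ : Equiv.Perm (Fin 3)) (hσ : σ = Equiv.swap 0 1 ∨ σ = Equiv.swap 1 2)
    (C : Matrix (Fin 3) (Fin 3) ℂ)
    (hpat : ∀ i j, j ≠ σ i → C i j = 0)
    (hinv : ∀ i, C i (σ i) ≠ 0)
    (c₁ c₂ ct₁ ct₂ : ℂ)
    (h : C * (S₂ c₁ c₂)ᵀ = (S₂ ct₁ ct₂)ᵀ * C) :
    c₁ = 0 ∧ c₂ = 0 ∧ ct₁ = 0 ∧ ct₂ = 0 := by
  rcases hσ with rfl | rfl
  · have e11 := congrFun (congrFun h 1) 1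
    have e02 := congrFun (congrFun h 0) 2
    have e00 := congrFun (congrFun h 0) 0
    have e12 := congrFun (congrFun h 1) 2
    simp [Matrix.mul_apply, Fin.sum_univ_three, S₂, Matrix.transpose_apply,
      hpat 2 1 (by decide), hpat 1 2 (by decide), hpat 1 1 (by decide)] at e11 e02 e00 e12
    have h10 := hinv 1
    have h01 := hinv 0
    have h22 := hinv 2
    simp only [show Equiv.swap (0:Fin 3) 1 1 = 0 by decide,
      show Equiv.swap (0:Fin 3) 1 0 = 1 by decide,
      show Equiv.swap (0:Fin 3) 1 2 = 2 by decide] at h10 h01 h22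
    tauto
  · have e01 := congrFun (congrFun h 0) 1
    have e22 := congrFun (congrFun h 2) 2
    have e02 := congrFun (congrFun h 0) 2
    have e11 := congrFun (congrFun h 1) 1
    simp [Matrix.mul_apply, Fin.sum_univ_three, S₂, Matrix.transpose_apply,
      hpat 1 1 (by decide), hpat 0 1 (by decide), hpat 1 0 (by decide)] at e01 e22 e02 e11
    have h00 := hinv 0
    have h12 := hinv 1
    have h21 := hinv 2
    simp only [show Equiv.swap (1:Fin 3) 2 0 = 0 by decide,
      show Equiv.swap (1:Fin 3) 2 1 = 2 by decide,
      show Equiv.swap (1:Fin 3) 2 2 = 1 by decide] at h00 h12 h21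
    tauto
end
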